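/- If m = (a+b)/2 (with a+b even), then the survival function of DTSP(a,m,b,n) at m equals 1/2; i.e., m is the median of the distribution regardless of n > 0. -/

import Mathlib

/-!
On `[m, b)` the pmf is `((b - y)^n - (b - y - 1)^n) / C`, so the upper tail telescopes to
`(b - m)^n / C = (b - m) / (b - a)`, which is `1 / 2` exactly when `b - a = 2 (b - m)`.
-/

open Finset

/-- The pmf of the discrete two-sided power distribution DTSP(a, m, b, n). -/
noncomputable def dtspPmf (a m b : ℤ) (n : ℝ) (y : ℤ) : ℝ :=
  if y < m then
    (((y - a + 1 : ℤ) : ℝ) ^ n - ((y - a : ℤ) : ℝ) ^ n) /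
      (((b - a : ℤ) : ℝ) * ((m - a : ℤ) : ℝ) ^ (n - 1))
  else
    (((b - y : ℤ) : ℝ) ^ n - ((b - y - 1 : ℤ) : ℝ) ^ n) /
      (((b - a : ℤ) : ℝ) * ((b - m : ℤ) : ℝ) ^ (n - 1))

theorem Finset.sum_Ico_int_sub_add_one {M : Type*} [AddCommGroup M] (f : ℤ → M) {m n : ℤ}
    (hmn : m ≤ n) : ∑ i ∈ Ico m n, (f i - f (i + 1)) = f m - f n := by
  induction n, hmn using Int.leInduction with
  | base => simp
  | succ n hmn ih =>
    rw [← insert_Ico_right_eq_Ico_add_one hmn, sum_insert right_notMem_Ico, ih]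
    abel

theorem dtspPmf_of_le {a m b : ℤ} (n : ℝ) {y : ℤ} (hy : m ≤ y) :
    dtspPmf a m b n y = (((b - y : ℤ) : ℝ) ^ n - ((b - (y + 1) : ℤ) : ℝ) ^ n) /
      (((b - a : ℤ) : ℝ) * ((b - m : ℤ) : ℝ) ^ (n - 1)) := by
  rw [dtspPmf, if_neg hy.not_gt, sub_add_eq_sub_sub]

theorem sum_Ico_dtspPmf {a m b : ℤ} {n : ℝ} (hn : 0 < n) {c : ℤ} (hmc : m ≤ c) (hcb : c ≤ b) :
    ∑ t ∈ Ico c b, dtspPmf a m b n t =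
      ((b - c : ℤ) : ℝ) ^ n / (((b - a : ℤ) : ℝ) * ((b - m : ℤ) : ℝ) ^ (n - 1)) := by
  rw [sum_congr rfl fun t ht => dtspPmf_of_le n (hmc.trans (mem_Ico.mp ht).1), ← sum_div,
    sum_Ico_int_sub_add_one (fun t => ((b - t : ℤ) : ℝ) ^ n) hcb]
  simp [Real.zero_rpow hn.ne']

theorem dtsp_survival_at_mode {a m b : ℤ} {n : ℝ} (hmb : m < b) (hn : 0 < n) :
    ∑ t ∈ Icc m (b - 1), dtspPmf a m b n t = ((b - m : ℤ) : ℝ) / ((b - a : ℤ) : ℝ) := by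
  have hbm : (0 : ℝ) < ((b - m : ℤ) : ℝ) := by exact_mod_cast sub_pos.mpr hmb
  rw [Icc_sub_one_right_eq_Ico, sum_Ico_dtspPmf hn le_rfl hmb.le,
    Real.rpow_sub_one hbm.ne']
  field_simp

theorem dtsp_median_general (a m b : ℤ) (n : ℝ)
    (hmb : m < b) (hn : 0 < n) (hmed : 2 * m = a + b) :
    ∑ t ∈ Finset.Icc m (b - 1), dtspPmf a m b n t = 1 / 2 := by
  have hba : ((b - a : ℤ) : ℝ) = 2 * ((b - m : ℤ) : ℝ) := by
    exact_mod_cast (by omega : b - a = 2 * (b - m))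
  have hbm : ((b - m : ℤ) : ℝ) ≠ 0 := by exact_mod_cast (sub_pos.mpr hmb).ne'
  rw [dtsp_survival_at_mode hmb hn, hba]
  field_simp

/-- If m = (a+b)/2, then m is the median of DTSP(a,m,b,n): S(m) = 1/2 regardless of n. -/
theorem dtsp_median (a m b : ℤ) (n : ℝ)
    (ham : a < m) (hmb : m < b) (hn : 0 < n) (hmed : 2 * m = a + b) :
    ∑ t ∈ Finset.Icc m (b - 1), dtspPmf a m b n t = 1 / 2 :=
  dtsp_median_general a m b n hmb hn hmed
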